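/- Let d : (1, ∞) → ℝ with d(α) ≥ 0 for all α > 1, let b ≥ 0, set p₀ = 2^(−b), and let p₁ ∈ (0, 1] satisfy p₁ ≤ (exp(d(α)) · p₀)^((α−1)/α) for every α > 1. Then log₂ p₁ ≤ −b + L₂(b), where L₂(b) = inf_{α > 1} ( d(α)·(α−1)/(α·log 2) + b/α ) (assume the infimum is over a set bounded below). -/

import Mathlib

open Real

theorem Real.logb_exp_mul_rpow_neg {B : ℝ} (hB : 1 < B) (x b : ℝ) :
    logb B (exp x * B ^ (-b)) = x / log B - b := by
  have hlogB : log B ≠ 0 := (log_pos hB).ne'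
  rw [logb, log_mul (exp_ne_zero x) (rpow_pos_of_pos (by linarith) _).ne', log_exp,
    log_rpow (by linarith)]
  field_simp
  ring

theorem Real.logb_le_of_le_rpow_exp_mul_rpow_neg {B p x b α : ℝ} (hB : 1 < B) (hp : 0 < p)
    (hα : 0 < α) (h : p ≤ (exp x * B ^ (-b)) ^ ((α - 1) / α)) :
    logb B p ≤ -b + (x * (α - 1) / (α * log B) + b / α) := by
  have hlogB : 0 < log B := log_pos hB
  calc logb B p ≤ logb B ((exp x * B ^ (-b)) ^ ((α - 1) / α)) := logb_le_logb_of_le hB hp h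
    _ = (α - 1) / α * (x / log B - b) := by
        rw [logb_rpow_eq_mul_logb_of_pos (by positivity), logb_exp_mul_rpow_neg hB]
    _ = -b + (x * (α - 1) / (α * log B) + b / α) := by
        field_simp
        ring

theorem log_posterior_bound_general (d : ℝ → ℝ)
    (b : ℝ) (p₀ p₁ : ℝ) (hp₀ : p₀ = (2 : ℝ) ^ (-b))
    (hp₁ : p₁ ∈ Set.Ioc (0 : ℝ) 1)
    (hup : ∀ α : ℝ, 1 < α → p₁ ≤ (Real.exp (d α) * p₀) ^ ((α - 1) / α)) :
    Real.logb 2 p₁ ≤ -b + ⨅ α : {a : ℝ // 1 < a},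
      (d α.1 * (α.1 - 1) / (α.1 * Real.log 2) + b / α.1) := by
  subst hp₀
  have : Nonempty {a : ℝ // 1 < a} := ⟨⟨2, one_lt_two⟩⟩
  refine le_add_of_sub_left_le (le_ciInf fun ⟨α, hα⟩ => sub_left_le_of_le_add ?_)
  exact logb_le_of_le_rpow_exp_mul_rpow_neg one_lt_two hp₁.1 (by linarith) (hup α hα)

/-- If the prior of a `b`-bit secret is `p₀ = 2^(−b)` and the posterior `p₁`
satisfies the upper probability preservation inequality at every order `α > 1`,
then `log₂ p₁ ≤ −b + L₂(b)`. -/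
theorem log_posterior_bound (d : ℝ → ℝ) (hd : ∀ α : ℝ, 1 < α → 0 ≤ d α)
    (b : ℝ) (hb : 0 ≤ b) (p₀ p₁ : ℝ) (hp₀ : p₀ = (2 : ℝ) ^ (-b))
    (hp₁ : p₁ ∈ Set.Ioc (0 : ℝ) 1)
    (hup : ∀ α : ℝ, 1 < α → p₁ ≤ (Real.exp (d α) * p₀) ^ ((α - 1) / α))
    (hbdd : BddBelow (Set.range fun α : {a : ℝ // 1 < a} =>
      d α.1 * (α.1 - 1) / (α.1 * Real.log 2) + b / α.1)) :
    Real.logb 2 p₁ ≤ -b + ⨅ α : {a : ℝ // 1 < a},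
      (d α.1 * (α.1 - 1) / (α.1 * Real.log 2) + b / α.1) :=
  log_posterior_bound_general d b p₀ p₁ hp₀ hp₁ hup
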